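/- arXiv:1610.03959 — 7 statements merged into one kernel-verified Lean document; each statement's English description precedes it below -/
import Mathlib

section
/- For every N-E lattice path P from (0,0) to (mn,n) with step sequence (s_1,...,s_n), there exists a unique index 0 ≤ i_0 ≤ n-1 such that the i_0-th cyclic permutation d_{i_0}(P), with step sequence (0, s_{i_0+2}-s_{i_0+1}, ..., s_n - s_{i_0+1}, s_1+mn+1-s_{i_0+1}, ..., s_{i_0}+mn+1-s_{i_0+1}), is an m-Dyck path of height n (i.e., satisfies the condition that its j-th entry is at most m(j-1) for all j). -/
/-!
Extend the step sequence of `P` by a copy of itself translated by `mn + 1`, so that the rotations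
of `P` are the length-`n` windows of the extension, and measure the height `g k` of its `k`-th
entry above the line of slope `m`. A rotation is an `m`-Dyck path exactly when `g` never exceeds
its first value on the window. Since `g (k + n) = g k + 1`, this happens precisely for the window
starting at the first maximum of `g` on `1, …, n`: an earlier maximum would reappear inside the
window one unit higher, and any two admissible windows would each dominate the other's start,
one of them with the extra unit.
-/

theorem Finset.exists_first_max_image {α β : Type*} [LinearOrder α] [LinearOrder β]
    (s : Finset α) (f : α → β) (hs : s.Nonempty) :
    ∃ p ∈ s, (∀ x ∈ s, f x ≤ f p) ∧ ∀ x ∈ s, x < p → f x < f p := by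
  obtain ⟨q, hq, hmax⟩ := s.exists_max_image f hs
  have hne : (s.filter fun x => f x = f q).Nonempty := ⟨q, mem_filter.2 ⟨hq, rfl⟩⟩
  obtain ⟨hp, hpq⟩ := mem_filter.1 (min'_mem _ hne)
  refine ⟨_, hp, fun x hx => (hmax x hx).trans_eq hpq.symm, fun x hx hxp => ?_⟩
  refine ((hmax x hx).lt_of_ne fun hxq => ?_).trans_eq hpq.symm
  exact (min'_le _ x (mem_filter.2 ⟨hx, hxq⟩)).not_gt hxp

section CyclicShift

variable {n : ℕ} {g : ℕ → ℤ}

theorem cyclic_shift_le_of_isFirstMax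
    (hshift : ∀ k, 1 ≤ k → k ≤ n → g (k + n) = g k + 1)
    {p : ℕ} (hp : p ∈ Finset.Icc 1 n) (hmax : ∀ k ∈ Finset.Icc 1 n, g k ≤ g p)
    (hfirst : ∀ k ∈ Finset.Icc 1 n, k < p → g k < g p) :
    ∀ j, 1 ≤ j → j ≤ n → g (p - 1 + j) ≤ g (p - 1 + 1) := by
  intro j hj hjn
  obtain ⟨hp1, hpn⟩ := Finset.mem_Icc.1 hp
  rw [Nat.sub_add_cancel hp1]
  by_cases hwin : p - 1 + j ≤ n
  · exact hmax _ (Finset.mem_Icc.2 ⟨by omega, hwin⟩)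
  · obtain ⟨k, hpk⟩ : ∃ k, p - 1 + j = k + n := ⟨p - 1 + j - n, by omega⟩
    have hk : g k < g p := hfirst k (Finset.mem_Icc.2 ⟨by omega, by omega⟩) (by omega)
    rw [hpk, hshift k (by omega) (by omega)]
    omega

theorem le_of_cyclic_shift_le (hshift : ∀ k, 1 ≤ k → k ≤ n → g (k + n) = g k + 1)
    {i i' : ℕ} (hi : ∀ j, 1 ≤ j → j ≤ n → g (i + j) ≤ g (i + 1))
    (hi' : ∀ j, 1 ≤ j → j ≤ n → g (i' + j) ≤ g (i' + 1)) (hi'n : i' ≤ n - 1) :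
    i' ≤ i := by
  by_contra! hlt
  have h₁ := hi (i' - i + 1) (by omega) (by omega)
  have h₂ := hi' (i + 1 + n - i') (by omega) (by omega)
  rw [show i + (i' - i + 1) = i' + 1 by omega] at h₁
  rw [show i' + (i + 1 + n - i') = i + 1 + n by omega, hshift _ (by omega) (by omega)] at h₂
  omega

theorem existsUnique_cyclic_shift_le (hn : 0 < n)
    (hshift : ∀ k, 1 ≤ k → k ≤ n → g (k + n) = g k + 1) :
    ∃! i : ℕ, i ≤ n - 1 ∧ ∀ j, 1 ≤ j → j ≤ n → g (i + j) ≤ g (i + 1) := by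
  obtain ⟨p, hp, hmax, hfirst⟩ :=
    (Finset.Icc 1 n).exists_first_max_image g ⟨1, Finset.mem_Icc.2 ⟨le_rfl, hn⟩⟩
  have hpn : p - 1 ≤ n - 1 := Nat.sub_le_sub_right (Finset.mem_Icc.1 hp).2 1
  have hp' := cyclic_shift_le_of_isFirstMax hshift hp hmax hfirst
  exact ⟨p - 1, ⟨hpn, hp'⟩, fun i ⟨hin, hi⟩ =>
    le_antisymm (le_of_cyclic_shift_le hshift hp' hi hin)
      (le_of_cyclic_shift_le hshift hi hp' hpn)⟩

end CyclicShift

/-- Entries `n + 1, …, 2n` are the paper's `\bar{s}_1, …, \bar{s}_n`. -/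
def cyclicExtension (m n : ℕ) (s : ℕ → ℤ) (k : ℕ) : ℤ :=
  if k ≤ n then s k else s (k - n) + m * n + 1

theorem cyclicExtension_add_self {m n : ℕ} {s : ℕ → ℤ} {k : ℕ}
    (hk : 1 ≤ k) (hkn : k ≤ n) :
    cyclicExtension m n s (k + n) = cyclicExtension m n s k + (m * n + 1) := by
  rw [cyclicExtension, if_neg (by omega), Nat.add_sub_cancel, cyclicExtension, if_pos hkn]
  ring

theorem rotation_entry_eq (m n : ℕ) (s : ℕ → ℤ) {i : ℕ} (hi : i + 1 ≤ n) (j : ℕ) :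
    (if i + j ≤ n then s (i + j) - s (i + 1)
      else s (i + j - n) + (m : ℤ) * n + 1 - s (i + 1)) =
      cyclicExtension m n s (i + j) - cyclicExtension m n s (i + 1) := by
  simp only [cyclicExtension, if_pos hi]
  split_ifs <;> ring

theorem rotation_entry_le_iff (m n : ℕ) (s : ℕ → ℤ) {i j : ℕ}
    (hi : i + 1 ≤ n) (hj : 1 ≤ j) :
    (if i + j ≤ n then s (i + j) - s (i + 1)
      else s (i + j - n) + (m : ℤ) * n + 1 - s (i + 1)) ≤ ((m * (j - 1) : ℕ) : ℤ) ↔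
      cyclicExtension m n s (i + j) - m * (i + j : ℕ) ≤
        cyclicExtension m n s (i + 1) - m * (i + 1 : ℕ) := by
  rw [rotation_entry_eq m n s hi, Nat.cast_mul, Nat.cast_sub hj]
  push_cast
  constructor <;> intro <;> linarith

theorem cycle_lemma_general (m n : ℕ) (hn : 0 < n)
    (s : ℕ → ℤ) :
    ∃! i : ℕ, i ≤ n - 1 ∧ ∀ j, 1 ≤ j → j ≤ n →
      (if i + j ≤ n then s (i + j) - s (i + 1)
       else s (i + j - n) + (m : ℤ) * n + 1 - s (i + 1)) ≤ ((m * (j - 1) : ℕ) : ℤ) := by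
  set g : ℕ → ℤ := fun k => cyclicExtension m n s k - m * k
  have hshift : ∀ k, 1 ≤ k → k ≤ n → g (k + n) = g k + 1 := fun k hk hkn => by
    simp only [g, cyclicExtension_add_self hk hkn]
    push_cast
    ring
  refine (existsUnique_congr fun i => and_congr_right fun hin => ?_).2
    (existsUnique_cyclic_shift_le hn hshift)
  exact forall_congr' fun j => imp_congr_right fun hj =>
    imp_congr_right fun _ => rotation_entry_le_iff m n s (by omega) hj

/-- Cycle lemma: for every N-E lattice path from `(0,0)` to `(mn, n)` with step
sequence `s` (indexed `1, …, n`, weakly increasing, `0 ≤ s 1`, `s n ≤ mn`),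
there is a unique index `0 ≤ i ≤ n-1` such that the `i`-th cyclic permutation,
with `j`-th entry `s (i+j) - s (i+1)` if `i+j ≤ n` and
`s (i+j-n) + mn + 1 - s (i+1)` otherwise, is an m-Dyck path, i.e. its `j`-th
entry is at most `m (j-1)` for all `1 ≤ j ≤ n`. -/
theorem cycle_lemma (m n : ℕ) (hm : 0 < m) (hn : 0 < n)
    (s : ℕ → ℤ) (h0 : 0 ≤ s 1)
    (hmono : ∀ i j, 1 ≤ i → i ≤ j → j ≤ n → s i ≤ s j)
    (hub : s n ≤ (m : ℤ) * n) :
    ∃! i : ℕ, i ≤ n - 1 ∧ ∀ j, 1 ≤ j → j ≤ n →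
      (if i + j ≤ n then s (i + j) - s (i + 1)
       else s (i + j - n) + (m : ℤ) * n + 1 - s (i + 1)) ≤ ((m * (j - 1) : ℕ) : ℤ) :=
  cycle_lemma_general m n hn s
end

section
/- The map h sending a lattice path P from (0,0) to (mn,n) to the pair (d_{i_0}(P), s_{i_0+1}) — where i_0 is the unique index such that d_{i_0}(P) is an m-Dyck path — is a bijection between the set of N-E lattice paths from (0,0) to (mn,n) and the set of pairs (D, k) where D is an m-Dyck path of height n and k ∈ {0, 1, ..., mn}. -/
/-!
Extend a step sequence `s` quasi-periodically by `s (j + n) = s j + (mn + 1)`; every cyclic shift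
`d_i(P)` is then the window `s (i + ·) - s i` of this extension. The excess `s j - m j` of the
extension grows by exactly `1` per period, so `d_i(P)` is an m-Dyck path iff `i` maximizes the
excess over the following period, and the first maximum over one period is the only such `i`
(cycle lemma). Conversely, the extension of the Dyck path `D`, raised by `k`, first reaches
height `mn + 1` at `n - i₀`; this recovers `i₀`, and `P` is the window of length `n` there.
-/

namespace CycleLemma

variable {n : ℕ}

section PeriodicExt

variable [NeZero n] (c : ℤ) (s : Fin n → ℤ)

def periodicExt (j : ℕ) : ℤ := s ⟨j % n, Nat.mod_lt j (NeZero.pos n)⟩ + (j / n : ℕ) * c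

theorem periodicExt_of_lt {j : ℕ} (hj : j < n) : periodicExt c s j = s ⟨j, hj⟩ := by
  simp [periodicExt, Nat.div_eq_of_lt hj, Nat.mod_eq_of_lt hj]

theorem periodicExt_val (i : Fin n) : periodicExt c s i = s i :=
  periodicExt_of_lt c s i.isLt

theorem periodicExt_add_self (j : ℕ) : periodicExt c s (j + n) = periodicExt c s j + c := by
  simp only [periodicExt, Nat.add_mod_right, Nat.add_div_right j (NeZero.pos n)]
  push_cast
  ring

theorem periodicExt_self : periodicExt c s n = s ⟨0, NeZero.pos n⟩ + c := by
  rw [← periodicExt_of_lt c s (NeZero.pos n), ← periodicExt_add_self, zero_add]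

theorem eq_periodicExt {F : ℕ → ℤ} (hF : ∀ j, F (j + n) = F j + c)
    (hs : ∀ i : Fin n, F i = s i) (j : ℕ) : F j = periodicExt c s j := by
  have := NeZero.pos n
  induction j using Nat.strong_induction_on with
  | _ j ih =>
    rcases lt_or_ge j n with hj | hj
    · rw [periodicExt_of_lt c s hj]
      exact hs ⟨j, hj⟩
    · obtain ⟨j, rfl⟩ := Nat.exists_eq_add_of_le' hj
      rw [hF, periodicExt_add_self, ih j (by omega)]

theorem monotone_periodicExt (hs : Monotone s) (hc : ∀ i j, s i ≤ s j + c) :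
    Monotone (periodicExt c s) := by
  have := NeZero.pos n
  refine monotone_nat_of_le_succ fun j => ?_
  induction j using Nat.strong_induction_on with
  | _ j ih =>
    rcases lt_trichotomy (j + 1) n with hj | hj | hj
    · rw [periodicExt_of_lt c s hj, periodicExt_of_lt c s (by omega)]
      exact hs (Fin.mk_le_mk.2 (by omega))
    · rw [hj, periodicExt_self, periodicExt_of_lt c s (by omega)]
      exact hc _ _
    · obtain ⟨j, rfl⟩ : ∃ j', j = j' + n := ⟨j - n, by omega⟩
      rw [show j + n + 1 = j + 1 + n by ring, periodicExt_add_self, periodicExt_add_self]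
      linarith [ih j (by omega)]

end PeriodicExt

section Cycle

variable (f : ℕ → ℤ) (hf : ∀ j, f (j + n) = f j + 1)
include hf

theorem exists_cycle [NeZero n] : ∃ i : Fin n, ∀ j < n, f (i + j) ≤ f i := by
  have hmax : ∃ i, i < n ∧ ∀ l < n, f l ≤ f i := by
    obtain ⟨i, hi, hmax⟩ := (Finset.range n).exists_max_image f ⟨0, by simp [NeZero.pos n]⟩
    exact ⟨i, Finset.mem_range.1 hi, fun l hl => hmax l (Finset.mem_range.2 hl)⟩
  classical
  obtain ⟨hlt, hle⟩ := Nat.find_spec hmax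
  -- the first maximum beats every earlier point strictly, which absorbs the `+ 1` after wrapping
  have hstrict : ∀ l < Nat.find hmax, f l < f (Nat.find hmax) := fun l hl => by
    have := Nat.find_min hmax hl
    push Not at this
    obtain ⟨l', hl', hfl⟩ := this (by omega)
    exact hfl.trans_le (hle l' hl')
  refine ⟨⟨Nat.find hmax, hlt⟩, fun j hj => ?_⟩
  rcases lt_or_ge (Nat.find hmax + j) n with hj' | hj'
  · exact hle _ hj'
  · obtain ⟨l, hl⟩ : ∃ l, Nat.find hmax + j = l + n := ⟨Nat.find hmax + j - n, by omega⟩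
    rw [hl, hf]
    linarith [hstrict l (by omega)]

theorem eq_of_cycle {a b : Fin n} (ha : ∀ j < n, f (a + j) ≤ f a)
    (hb : ∀ j < n, f (b + j) ≤ f b) : a = b := by
  have key : ∀ a b : Fin n, (∀ j < n, f (a + j) ≤ f a) → (∀ j < n, f (b + j) ≤ f b) →
      ¬ a < b := fun a b ha hb hab => by
    have h1 := ha (b - a) (by omega)
    have h2 := hb (a + n - b) (by omega)
    rw [show (a : ℕ) + (b - a) = b by omega] at h1
    rw [show (b : ℕ) + (a + n - b) = a + n by omega, hf] at h2
    linarith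
  exact le_antisymm (not_lt.1 (key b a hb ha)) (not_lt.1 (key a b ha hb))

end Cycle

def cyclicShift (m : ℕ) (s : Fin n → ℤ) (i : Fin n) : Fin n → ℤ := fun j =>
  if hij : (i : ℕ) + (j : ℕ) < n then s ⟨(i : ℕ) + (j : ℕ), hij⟩ - s i
  else s ⟨(i : ℕ) + (j : ℕ) - n, by omega⟩ + (m : ℤ) * n + 1 - s i

def IsDyck (m : ℕ) (t : Fin n → ℤ) : Prop := ∀ j : Fin n, t j ≤ (m : ℤ) * (j : ℕ)

section Shift

variable [NeZero n] (m : ℕ) (s : Fin n → ℤ)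

theorem cyclicShift_apply (i j : Fin n) :
    cyclicShift m s i j = periodicExt (m * n + 1) s (i + j) - s i := by
  unfold cyclicShift
  split_ifs with hij
  · rw [periodicExt_of_lt _ _ hij]
  · have h := periodicExt_add_self (m * n + 1) s (i + j - n)
    rw [Nat.sub_add_cancel (by omega),
      periodicExt_of_lt _ _ (show (i : ℕ) + j - n < n by omega)] at h
    rw [h]
    ring

theorem periodicExt_cyclicShift (i : Fin n) (j : ℕ) :
    periodicExt (m * n + 1) (cyclicShift m s i) j = periodicExt (m * n + 1) s (i + j) - s i :=
  (eq_periodicExt (F := fun j => periodicExt (m * n + 1) s (i + j) - s i) _ _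
    (fun j => by simp only [← add_assoc, periodicExt_add_self]; ring)
    (fun j => (cyclicShift_apply m s i j).symm) j).symm

theorem monotone_periodicExt_of_bounds (hs : Monotone s)
    (hb : ∀ j, 0 ≤ s j ∧ s j ≤ (m : ℤ) * n) : Monotone (periodicExt (m * n + 1) s) :=
  monotone_periodicExt _ s hs fun i j => by linarith [(hb i).2, (hb j).1]

theorem monotone_cyclicShift (hs : Monotone s) (hb : ∀ j, 0 ≤ s j ∧ s j ≤ (m : ℤ) * n)
    (i : Fin n) : Monotone (cyclicShift m s i) := fun a b hab => by
  simp only [cyclicShift_apply]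
  linarith [monotone_periodicExt_of_bounds m s hs hb (Nat.add_le_add_left (Fin.le_def.1 hab) i)]

theorem cyclicShift_nonneg (hs : Monotone s) (hb : ∀ j, 0 ≤ s j ∧ s j ≤ (m : ℤ) * n)
    (i j : Fin n) : 0 ≤ cyclicShift m s i j := by
  rw [cyclicShift_apply, ← periodicExt_val (m * n + 1) s i]
  linarith [monotone_periodicExt_of_bounds m s hs hb (Nat.le_add_right i j)]

def excess (j : ℕ) : ℤ := periodicExt (m * n + 1) s j - m * j

theorem excess_add_self (j : ℕ) : excess m s (j + n) = excess m s j + 1 := by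
  simp only [excess, periodicExt_add_self]
  push_cast
  ring

theorem isDyck_cyclicShift_iff (i : Fin n) :
    IsDyck m (cyclicShift m s i) ↔ ∀ j < n, excess m s (i + j) ≤ excess m s i := by
  simp only [IsDyck, cyclicShift_apply, excess, periodicExt_val, Fin.forall_iff, Nat.cast_add]
  refine forall₂_congr fun j _ => ?_
  constructor <;> intro h <;> linarith

theorem existsUnique_isDyck_cyclicShift : ∃! i : Fin n, IsDyck m (cyclicShift m s i) := by
  simp only [isDyck_cyclicShift_iff]
  exact (exists_cycle _ (excess_add_self m s)).elim fun i hi =>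
    ⟨i, hi, fun _ hb => eq_of_cycle _ (excess_add_self m s) hb hi⟩

noncomputable def dyckIndex : Fin n := (existsUnique_isDyck_cyclicShift m s).exists.choose

theorem isDyck_cyclicShift_dyckIndex : IsDyck m (cyclicShift m s (dyckIndex m s)) :=
  (existsUnique_isDyck_cyclicShift m s).exists.choose_spec

theorem dyckIndex_eq {i : Fin n} (hi : IsDyck m (cyclicShift m s i)) : dyckIndex m s = i :=
  (existsUnique_isDyck_cyclicShift m s).unique (isDyck_cyclicShift_dyckIndex m s) hi

end Shift

section Unshift

variable [NeZero n] (m : ℕ) (t : Fin n → ℤ) (k : ℤ)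

noncomputable def entryIndex : ℕ :=
  sInf {j | (m * n + 1 : ℤ) ≤ periodicExt (m * n + 1) t j + k}

noncomputable def cyclicUnshift : Fin n → ℤ := fun l =>
  periodicExt (m * n + 1) t (l + entryIndex m t k) + k - (m * n + 1)

variable {m t k}

theorem cyclicUnshift_cyclicShift {s : Fin n → ℤ} (hb : ∀ j, 0 ≤ s j ∧ s j ≤ (m : ℤ) * n)
    (i : Fin n) : cyclicUnshift m (cyclicShift m s i) (s i) = s := by
  have hext (j : ℕ) : periodicExt (m * n + 1) (cyclicShift m s i) j + s i =
      periodicExt (m * n + 1) s (i + j) := by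
    rw [periodicExt_cyclicShift]; ring
  have hentry : entryIndex m (cyclicShift m s i) (s i) = n - i := by
    have hmem : (m * n + 1 : ℤ) ≤ periodicExt (m * n + 1) (cyclicShift m s i) (n - i) + s i := by
      rw [hext, Nat.add_sub_cancel' i.isLt.le, periodicExt_self]
      linarith [(hb ⟨0, NeZero.pos n⟩).1]
    refine le_antisymm (Nat.sInf_le hmem) (le_csInf ⟨n - i, hmem⟩ fun j hj => ?_)
    by_contra! hlt
    rw [Set.mem_ofPred_eq, hext, periodicExt_of_lt _ _ (by omega)] at hj
    linarith [(hb ⟨i + j, by omega⟩).2]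
  funext l
  rw [cyclicUnshift, hentry, hext, show (i : ℕ) + (l + (n - i)) = l + n by omega,
    periodicExt_add_self, periodicExt_val]
  ring

theorem periodicExt_cyclicUnshift (l : ℕ) :
    periodicExt (m * n + 1) (cyclicUnshift m t k) l =
      periodicExt (m * n + 1) t (l + entryIndex m t k) + k - (m * n + 1) :=
  (eq_periodicExt
    (F := fun l => periodicExt (m * n + 1) t (l + entryIndex m t k) + k - (m * n + 1)) _ _
    (fun l => by simp only [add_right_comm l n, periodicExt_add_self]; ring) (fun _ => rfl) l).symm

variable (htd : ∀ j : Fin n, 0 ≤ t j ∧ t j ≤ (m : ℤ) * (j : ℕ))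
include htd

theorem apply_zero_of_dyck : t ⟨0, NeZero.pos n⟩ = 0 :=
  le_antisymm (by simpa using (htd ⟨0, NeZero.pos n⟩).2) (htd _).1

theorem monotone_periodicExt_of_dyck (ht : Monotone t) : Monotone (periodicExt (m * n + 1) t) :=
  monotone_periodicExt_of_bounds m t ht fun j => ⟨(htd j).1, (htd j).2.trans
    (mul_le_mul_of_nonneg_left (by exact_mod_cast j.isLt.le) (Int.natCast_nonneg m))⟩

theorem le_periodicExt_add_iff (ht : Monotone t) (hk : 0 ≤ k) (j : ℕ) :
    (m * n + 1 : ℤ) ≤ periodicExt (m * n + 1) t j + k ↔ entryIndex m t k ≤ j := by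
  have hn : n ∈ {j | (m * n + 1 : ℤ) ≤ periodicExt (m * n + 1) t j + k} := by
    simp only [Set.mem_ofPred_eq, periodicExt_self, apply_zero_of_dyck htd]
    linarith
  refine ⟨fun hj => Nat.sInf_le hj, fun hj => ?_⟩
  have he : (m * n + 1 : ℤ) ≤ periodicExt (m * n + 1) t (entryIndex m t k) + k :=
    Nat.sInf_mem ⟨n, hn⟩
  linarith [monotone_periodicExt_of_dyck htd ht hj]

theorem entryIndex_le (ht : Monotone t) (hk : 0 ≤ k) : entryIndex m t k ≤ n := by
  rw [← le_periodicExt_add_iff htd ht hk, periodicExt_self, apply_zero_of_dyck htd]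
  linarith

theorem entryIndex_pos (ht : Monotone t) (hk : 0 ≤ k ∧ k ≤ (m : ℤ) * n) :
    0 < entryIndex m t k := by
  by_contra! h
  have h0 := (le_periodicExt_add_iff htd ht hk.1 0).2 h
  rw [periodicExt_of_lt _ _ (NeZero.pos n), apply_zero_of_dyck htd] at h0
  linarith

theorem monotone_cyclicUnshift (ht : Monotone t) : Monotone (cyclicUnshift m t k) :=
  fun a b hab => by
    simp only [cyclicUnshift]
    linarith [monotone_periodicExt_of_dyck htd ht
      (Nat.add_le_add_right (Fin.le_def.1 hab) (entryIndex m t k))]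

theorem cyclicUnshift_bounds (ht : Monotone t) (hk : 0 ≤ k ∧ k ≤ (m : ℤ) * n) (l : Fin n) :
    0 ≤ cyclicUnshift m t k l ∧ cyclicUnshift m t k l ≤ (m : ℤ) * n := by
  have hpos := entryIndex_pos htd ht hk
  have hle := entryIndex_le htd ht hk.1
  have hmono := monotone_periodicExt_of_dyck htd ht
  have hlow := (le_periodicExt_add_iff htd ht hk.1 (l + entryIndex m t k)).2 (by omega)
  -- the point just before the entry index is below the threshold, and one period later
  -- it bounds the whole window
  have hprev := (le_periodicExt_add_iff htd ht hk.1 (entryIndex m t k - 1)).not.2 (by omega)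
  have hwin := hmono (show (l : ℕ) + entryIndex m t k ≤ entryIndex m t k - 1 + n by omega)
  rw [periodicExt_add_self] at hwin
  simp only [cyclicUnshift]
  constructor <;> linarith

theorem exists_add_entryIndex_eq (ht : Monotone t) (hk : 0 ≤ k ∧ k ≤ (m : ℤ) * n) :
    ∃ i : Fin n, (i : ℕ) + entryIndex m t k = n :=
  ⟨⟨n - entryIndex m t k, Nat.sub_lt (NeZero.pos n) (entryIndex_pos htd ht hk)⟩,
    Nat.sub_add_cancel (entryIndex_le htd ht hk.1)⟩

variable {i : Fin n} (hi : (i : ℕ) + entryIndex m t k = n)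
include hi

theorem cyclicUnshift_apply_of_add_entryIndex_eq : cyclicUnshift m t k i = k := by
  rw [cyclicUnshift, hi, periodicExt_self, apply_zero_of_dyck htd]
  ring

theorem cyclicShift_cyclicUnshift : cyclicShift m (cyclicUnshift m t k) i = t := by
  funext j
  rw [cyclicShift_apply, periodicExt_cyclicUnshift,
    cyclicUnshift_apply_of_add_entryIndex_eq htd hi,
    show (i : ℕ) + j + entryIndex m t k = j + n by omega, periodicExt_add_self, periodicExt_val]
  ring

theorem dyckIndex_cyclicUnshift : dyckIndex m (cyclicUnshift m t k) = i :=
  dyckIndex_eq m _ <| (cyclicShift_cyclicUnshift htd hi).symm ▸ fun j => (htd j).2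

end Unshift

abbrev LatticePath (m n : ℕ) :=
  {s : Fin n → ℤ // Monotone s ∧ ∀ j : Fin n, 0 ≤ s j ∧ s j ≤ (m : ℤ) * n}

abbrev DyckPath (m n : ℕ) :=
  {t : Fin n → ℤ // Monotone t ∧ ∀ j : Fin n, 0 ≤ t j ∧ t j ≤ (m : ℤ) * (j : ℕ)}

noncomputable def cycleEquiv (m n : ℕ) [NeZero n] :
    LatticePath m n ≃ DyckPath m n × Fin (m * n + 1) where
  toFun p :=
    (⟨cyclicShift m p.1 (dyckIndex m p.1), monotone_cyclicShift m p.1 p.2.1 p.2.2 _, fun j =>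
        ⟨cyclicShift_nonneg m p.1 p.2.1 p.2.2 _ j, isDyck_cyclicShift_dyckIndex m p.1 j⟩⟩,
      ⟨(p.1 (dyckIndex m p.1)).toNat, by have := p.2.2 (dyckIndex m p.1); omega⟩)
  invFun q :=
    ⟨cyclicUnshift m q.1.1 q.2, monotone_cyclicUnshift q.1.2.2 q.1.2.1,
      cyclicUnshift_bounds q.1.2.2 q.1.2.1 ⟨by positivity, by have := q.2.isLt; omega⟩⟩
  left_inv p := Subtype.ext <| by
    simpa [Int.toNat_of_nonneg (p.2.2 _).1] using
      cyclicUnshift_cyclicShift p.2.2 (dyckIndex m p.1)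
  right_inv := by
    rintro ⟨⟨t, ht, htd⟩, k⟩
    have hk : (0 : ℤ) ≤ k ∧ (k : ℤ) ≤ m * n := ⟨by positivity, by have := k.isLt; omega⟩
    obtain ⟨i, hi⟩ := exists_add_entryIndex_eq htd ht hk
    refine Prod.ext (Subtype.ext ?_) (Fin.ext ?_) <;> simp only [dyckIndex_cyclicUnshift htd hi]
    · exact cyclicShift_cyclicUnshift htd hi
    · simp [cyclicUnshift_apply_of_add_entryIndex_eq htd hi]

end CycleLemma

open CycleLemma in
/-- The map `h` sending a lattice path `P` from `(0,0)` to `(mn, n)` (encoded by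
its 0-indexed step sequence) to the pair `(d_{i₀}(P), s_{i₀+1})`, where `i₀` is
the unique index making the cyclic shift `d_{i₀}(P)` an m-Dyck path, is a
bijection onto (m-Dyck paths of height n) × {0, …, mn}. -/
theorem lattice_paths_equiv_dyck_times_fin (m n : ℕ) (hn : 0 < n) :
    ∃ h : {s : Fin n → ℤ // Monotone s ∧ ∀ j : Fin n, 0 ≤ s j ∧ s j ≤ (m : ℤ) * n} ≃
          {t : Fin n → ℤ // Monotone t ∧ ∀ j : Fin n, 0 ≤ t j ∧ t j ≤ (m : ℤ) * (j : ℕ)} ×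
          Fin (m * n + 1),
      ∀ p, ∃ i : Fin n,
        ((h p).1.1 = fun j : Fin n =>
          if hij : (i : ℕ) + (j : ℕ) < n then p.1 ⟨(i : ℕ) + (j : ℕ), hij⟩ - p.1 i
          else p.1 ⟨(i : ℕ) + (j : ℕ) - n,
              by have h1 := i.isLt; have h2 := j.isLt; omega⟩ + (m : ℤ) * n + 1 - p.1 i) ∧
        ((((h p).2 : ℕ)) : ℤ) = p.1 i := by
  have : NeZero n := ⟨hn.ne'⟩
  exact ⟨cycleEquiv m n, fun p => ⟨dyckIndex m p.1, rfl, Int.toNat_of_nonneg (p.2.2 _).1⟩⟩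
end

section
/- The number of m-Dyck paths of height n, i.e., sequences (s_1,...,s_n) of integers with 0 ≤ s_1 ≤ s_2 ≤ ... ≤ s_n and s_i ≤ m(i-1) for all i, equals (1/(mn+1)) * binomial((m+1)n, n). -/
/-!
Count more generally the monotone sequences `s` of length `n` with `s j < c + m * j`; the
Dyck paths are the case `c = 1`. Splitting on whether `s 0 = 0` (drop the first entry) or not
(subtract one everywhere) gives the ballot recurrence `G(n+1, c+1) = G(n+1, c) + G(n, c+1+m)`,
with `G(n+1, 0) = 0` and `G(0, c) = 1`. By Pascal's rule, `C(K, n+1) - m * C(K, n)` with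
`K = (m+1)n + m + c` satisfies the same recurrence, and at `c = 1` it equals
`C((m+1)(n+1), n+1) / (m(n+1) + 1)`.
-/

lemma Nat.choose_succ_eq_mul_choose_of_sub_eq {N n m : ℕ} (h : N - n = m * (n + 1)) :
    N.choose (n + 1) = m * N.choose n :=
  Nat.eq_of_mul_eq_mul_right (by omega : 0 < n + 1) <| by
    rw [Nat.choose_succ_right_eq, h]; ring

abbrev BallotSeq (m n c : ℕ) : Type :=
  {s : Fin n → ℕ // Monotone s ∧ ∀ j : Fin n, s j < c + m * j}

namespace BallotSeq

variable {m n c : ℕ}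

instance : Finite (BallotSeq m n c) :=
  Finite.of_injective
    (fun s j => (⟨s.1 j, (s.2.2 j).trans_le (by gcongr; omega)⟩ : Fin (c + m * n)))
    fun s t h => Subtype.ext <| funext fun j => congrArg Fin.val (congrFun h j)

lemma card_length_zero : Nat.card (BallotSeq m 0 c) = 1 :=
  Nat.card_eq_one_iff_unique.mpr
    ⟨inferInstance, ⟨⟨Fin.elim0, fun i => i.elim0, fun i => i.elim0⟩⟩⟩

lemma card_bound_zero : Nat.card (BallotSeq m (n + 1) 0) = 0 := by
  rw [Nat.card_eq_zero]
  exact Or.inl ⟨fun s => by simpa using s.2.2 0⟩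

lemma monotone_cons_zero {t : Fin n → ℕ} (ht : Monotone t) :
    Monotone (Fin.cons 0 t : Fin (n + 1) → ℕ) :=
  monotone_iff_forall_lt.mpr <|
    (Fin.liftFun_cons _).mpr ⟨fun _ => Nat.zero_le _, monotone_iff_forall_lt.mp ht⟩

lemma pos_of_zero_ne_zero (s : BallotSeq m (n + 1) c) (h : s.1 0 ≠ 0) (j : Fin (n + 1)) :
    0 < s.1 j :=
  (Nat.pos_of_ne_zero h).trans_le (s.2.1 (Fin.zero_le j))

def succBoundEquiv :
    BallotSeq m (n + 1) (c + 1) ≃ BallotSeq m (n + 1) c ⊕ BallotSeq m n (c + 1 + m) where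
  toFun s :=
    if h : s.1 0 = 0 then
      .inr ⟨Fin.tail s.1, s.2.1.comp Fin.strictMono_succ.monotone, fun j => by
        have := s.2.2 j.succ
        simp only [Fin.val_succ] at this
        simp only [Fin.tail]
        nlinarith⟩
    else
      .inl ⟨fun j => s.1 j - 1, fun i j hij => Nat.sub_le_sub_right (s.2.1 hij) 1, fun j => by
        have := s.2.2 j
        have := pos_of_zero_ne_zero s h j
        dsimp only
        omega⟩
  invFun
    | .inl t => ⟨fun j => t.1 j + 1, fun i j hij => Nat.add_le_add_right (t.2.1 hij) 1,
        fun j => by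
          have := t.2.2 j
          dsimp only
          omega⟩
    | .inr t => ⟨Fin.cons 0 t.1, monotone_cons_zero t.2.1, Fin.cases (by simp) fun j => by
        have := t.2.2 j
        simp only [Fin.cons_succ, Fin.val_succ]
        nlinarith⟩
  left_inv s := by
    by_cases h : s.1 0 = 0
    · simp only [h, dite_true]
      exact Subtype.ext (by simp [← h])
    · simp only [h, dite_false]
      exact Subtype.ext (funext fun j => Nat.sub_add_cancel (pos_of_zero_ne_zero s h j))
  right_inv
    | .inl t => by simp
    | .inr t => by simp

lemma card_succ_bound : Nat.card (BallotSeq m (n + 1) (c + 1)) =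
    Nat.card (BallotSeq m (n + 1) c) + Nat.card (BallotSeq m n (c + 1 + m)) := by
  rw [Nat.card_congr succBoundEquiv, Nat.card_sum]

theorem card_add_mul_choose (m n c : ℕ) :
    Nat.card (BallotSeq m (n + 1) c) + m * ((m + 1) * n + m + c).choose n =
      ((m + 1) * n + m + c).choose (n + 1) := by
  induction n generalizing c with
  | zero =>
    induction c with
    | zero => simp [card_bound_zero]
    | succ c ih =>
      rw [card_succ_bound, card_length_zero]
      simp only [mul_zero, zero_add, Nat.choose_zero_right, Nat.choose_one_right] at ih ⊢
      omega
  | succ n ihn =>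
    induction c with
    | zero =>
      rw [card_bound_zero, zero_add, add_zero,
        Nat.choose_succ_eq_mul_choose_of_sub_eq (n := n + 1) (m := m) (by ring_nf; omega)]
    | succ c ihc =>
      have hK : (m + 1) * (n + 1) + m + (c + 1) = ((m + 1) * n + m + (c + 1 + m)) + 1 := by ring
      have hK' : (m + 1) * (n + 1) + m + c = (m + 1) * n + m + (c + 1 + m) := by ring
      rw [card_succ_bound, hK, Nat.choose_succ_succ', Nat.choose_succ_succ']
      rw [hK'] at ihc
      linarith [ihn (c + 1 + m)]

end BallotSeq

theorem card_mDyck_paths_general (m n : ℕ) :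
    Nat.card {s : Fin n → ℕ // Monotone s ∧ ∀ j : Fin n, s j ≤ m * (j : ℕ)} *
      (m * n + 1) = Nat.choose ((m + 1) * n) n := by
  have hballot :
      Nat.card {s : Fin n → ℕ // Monotone s ∧ ∀ j : Fin n, s j ≤ m * (j : ℕ)} =
        Nat.card (BallotSeq m n 1) :=
    Nat.card_congr <| Equiv.subtypeEquivRight fun s => and_congr_right fun _ =>
      forall_congr' fun j => by omega
  rw [hballot]
  rcases n with _ | n
  · rw [BallotSeq.card_length_zero]; simp
  have hrec := BallotSeq.card_add_mul_choose m n 1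
  have hK : (m + 1) * n + m + 1 = (m + 1) * (n + 1) := by ring
  have hsucc := Nat.choose_succ_right_eq ((m + 1) * (n + 1)) n
  rw [hK] at hrec
  rw [show (m + 1) * (n + 1) - n = m * (n + 1) + 1 by ring_nf; omega] at hsucc
  zify at hrec hsucc ⊢
  linear_combination (m * (n + 1) + 1 : ℤ) * hrec + m * hsucc

/-- The number of m-Dyck paths of height n, encoded by weakly increasing step
sequences `(s_1, …, s_n)` of nonnegative integers with `s_i ≤ m(i-1)` (here
0-indexed: `s j ≤ m·j`), equals `(1/(mn+1))·binomial((m+1)n, n)`; equivalently,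
that number times `mn+1` equals `binomial((m+1)n, n)`. -/
theorem card_mDyck_paths (m n : ℕ) (hm : 0 < m) (hn : 0 < n) :
    Nat.card {s : Fin n → ℕ // Monotone s ∧ ∀ j : Fin n, s j ≤ m * (j : ℕ)} *
      (m * n + 1) = Nat.choose ((m + 1) * n) n :=
  card_mDyck_paths_general m n
end

section
/- Given an m-Dyck path D with step sequence (t_1,...,t_n) (so t_1 = 0 and t_j ≤ m(j-1)) and an integer 0 ≤ k ≤ mn, let j_0 be the unique index such that t_j + k ≤ mn for all j ≤ j_0 and t_j + k > mn for j > j_0. Then the sequence (t_{j_0+1}+k-mn-1, ..., t_n+k-mn-1, t_1+k, ..., t_{j_0}+k) is weakly increasing with all entries between 0 and mn, i.e., it is the step sequence of an N-E lattice path from (0,0) to (mn,n). -/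
/-!
Since `t j + k` exceeds `mn` exactly for `j > j₀` and `t j ≤ m (j - 1) ≤ mn`, the shifted tail
`t j + k - mn - 1` (for `j > j₀`) lies in `[0, k)`, while the head `t j + k` (for `j ≤ j₀`) lies in
`[k, mn]`. So putting the tail first keeps the sequence weakly increasing across the seam, and
inside each block monotonicity is that of `t`.
-/

section RotateSteps

variable (n j0 : ℕ) (N k : ℤ) (t : ℕ → ℤ)

/-- `N` plays the role of `mn`; the index `i` runs over `1, …, n`. -/
def rotateSteps (i : ℕ) : ℤ :=
  if i ≤ n - j0 then t (j0 + i) + k - N - 1 else t (i - (n - j0)) + k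

variable {n j0 N k t}

lemma rotateSteps_mem_Ico_of_le_sub
    (hgt : ∀ j, j0 < j → j ≤ n → N < t j + k) (htop : ∀ j, 1 ≤ j → j ≤ n → t j ≤ N)
    {i : ℕ} (hi1 : 1 ≤ i) (hi : i ≤ n - j0) :
    rotateSteps n j0 N k t i ∈ Set.Ico 0 k := by
  have hlow := hgt (j0 + i) (by omega) (by omega)
  have hhigh := htop (j0 + i) (by omega) (by omega)
  rw [rotateSteps, if_pos hi]
  constructor <;> omega

lemma rotateSteps_mem_Icc_of_sub_lt
    (hnn : ∀ j, 1 ≤ j → j ≤ n → 0 ≤ t j) (hle : ∀ j, 1 ≤ j → j ≤ j0 → t j + k ≤ N)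
    {i : ℕ} (hi : n - j0 < i) (hin : i ≤ n) :
    rotateSteps n j0 N k t i ∈ Set.Icc k N := by
  have hlow := hnn (i - (n - j0)) (by omega) (by omega)
  have hhigh := hle (i - (n - j0)) (by omega) (by omega)
  rw [rotateSteps, if_neg (by omega)]
  constructor <;> omega

variable (hgt : ∀ j, j0 < j → j ≤ n → N < t j + k) (htop : ∀ j, 1 ≤ j → j ≤ n → t j ≤ N)
  (hnn : ∀ j, 1 ≤ j → j ≤ n → 0 ≤ t j) (hle : ∀ j, 1 ≤ j → j ≤ j0 → t j + k ≤ N)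
include hgt htop hnn hle

theorem mapsTo_rotateSteps (hk0 : 0 ≤ k) (hkN : k ≤ N) :
    Set.MapsTo (rotateSteps n j0 N k t) (Set.Icc 1 n) (Set.Icc 0 N) := by
  rintro i ⟨hi1, hin⟩
  by_cases hhead : i ≤ n - j0
  · obtain ⟨h0, hk⟩ := rotateSteps_mem_Ico_of_le_sub hgt htop hi1 hhead
    exact ⟨h0, hk.le.trans hkN⟩
  · obtain ⟨hk, hN⟩ := rotateSteps_mem_Icc_of_sub_lt hnn hle (not_le.mp hhead) hin
    exact ⟨hk0.trans hk, hN⟩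

theorem monotoneOn_rotateSteps (hmono : ∀ i j, 1 ≤ i → i ≤ j → j ≤ n → t i ≤ t j) :
    MonotoneOn (rotateSteps n j0 N k t) (Set.Icc 1 n) := by
  rintro i ⟨hi1, hin⟩ j ⟨hj1, hjn⟩ hij
  by_cases hjhead : j ≤ n - j0
  · have hihead : i ≤ n - j0 := hij.trans hjhead
    have := hmono (j0 + i) (j0 + j) (by omega) (by omega) (by omega)
    simp only [rotateSteps, if_pos hihead, if_pos hjhead]
    omega
  by_cases hihead : i ≤ n - j0
  · calc rotateSteps n j0 N k t i ≤ k := (rotateSteps_mem_Ico_of_le_sub hgt htop hi1 hihead).2.le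
      _ ≤ rotateSteps n j0 N k t j := (rotateSteps_mem_Icc_of_sub_lt hnn hle (by omega) hjn).1
  · have := hmono (i - (n - j0)) (j - (n - j0)) (by omega) (by omega) (by omega)
    simp only [rotateSteps, if_neg hihead, if_neg hjhead]
    omega

end RotateSteps

theorem rotated_dyck_is_lattice_path_general (m n : ℕ)
    (t : ℕ → ℤ) (k : ℤ) (j0 : ℕ)
    (hmono : ∀ i j, 1 ≤ i → i ≤ j → j ≤ n → t i ≤ t j)
    (hnn : ∀ j, 1 ≤ j → j ≤ n → 0 ≤ t j)
    (hdyck : ∀ j, 1 ≤ j → j ≤ n → t j ≤ (m : ℤ) * ((j : ℤ) - 1))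
    (hk0 : 0 ≤ k) (hkmn : k ≤ (m : ℤ) * n)
    (hle : ∀ j, 1 ≤ j → j ≤ j0 → t j + k ≤ (m : ℤ) * n)
    (hgt : ∀ j, j0 < j → j ≤ n → (m : ℤ) * n < t j + k) :
    (∀ i, 1 ≤ i → i ≤ n →
      0 ≤ (if i ≤ n - j0 then t (j0 + i) + k - (m : ℤ) * n - 1
           else t (i - (n - j0)) + k) ∧
      (if i ≤ n - j0 then t (j0 + i) + k - (m : ℤ) * n - 1
       else t (i - (n - j0)) + k) ≤ (m : ℤ) * n) ∧
    (∀ i j, 1 ≤ i → i ≤ j → j ≤ n →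
      (if i ≤ n - j0 then t (j0 + i) + k - (m : ℤ) * n - 1
       else t (i - (n - j0)) + k) ≤
      (if j ≤ n - j0 then t (j0 + j) + k - (m : ℤ) * n - 1
       else t (j - (n - j0)) + k)) := by
  have htop : ∀ j, 1 ≤ j → j ≤ n → t j ≤ (m : ℤ) * n := fun j hj1 hjn =>
    (hdyck j hj1 hjn).trans (mul_le_mul_of_nonneg_left (by omega) (Int.natCast_nonneg m))
  have hbounds := mapsTo_rotateSteps hgt htop hnn hle hk0 hkmn
  have hmono' := monotoneOn_rotateSteps hgt htop hnn hle hmono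
  exact ⟨fun i hi1 hin => hbounds ⟨hi1, hin⟩,
    fun i j hi1 hij hjn => hmono' ⟨hi1, hij.trans hjn⟩ ⟨hi1.trans hij, hjn⟩ hij⟩

/-- Given an m-Dyck path step sequence `t` (1-indexed, `t 1 = 0`, weakly
increasing, `t j ≤ m(j-1)`), an integer `0 ≤ k ≤ mn`, and the unique index `j₀`
with `t j + k ≤ mn` for `j ≤ j₀` and `t j + k > mn` for `j₀ < j ≤ n`, the
rotated sequence `(t_{j₀+1}+k-mn-1, …, t_n+k-mn-1, t_1+k, …, t_{j₀}+k)` is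
weakly increasing with all entries in `[0, mn]`, i.e. it is the step sequence of
an N-E lattice path from `(0,0)` to `(mn, n)`. -/
theorem rotated_dyck_is_lattice_path (m n : ℕ) (hm : 0 < m) (hn : 0 < n)
    (t : ℕ → ℤ) (k : ℤ) (j0 : ℕ)
    (ht1 : t 1 = 0)
    (hmono : ∀ i j, 1 ≤ i → i ≤ j → j ≤ n → t i ≤ t j)
    (hnn : ∀ j, 1 ≤ j → j ≤ n → 0 ≤ t j)
    (hdyck : ∀ j, 1 ≤ j → j ≤ n → t j ≤ (m : ℤ) * ((j : ℤ) - 1))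
    (hk0 : 0 ≤ k) (hkmn : k ≤ (m : ℤ) * n)
    (hj01 : 1 ≤ j0) (hj0n : j0 ≤ n)
    (hle : ∀ j, 1 ≤ j → j ≤ j0 → t j + k ≤ (m : ℤ) * n)
    (hgt : ∀ j, j0 < j → j ≤ n → (m : ℤ) * n < t j + k) :
    (∀ i, 1 ≤ i → i ≤ n →
      0 ≤ (if i ≤ n - j0 then t (j0 + i) + k - (m : ℤ) * n - 1
           else t (i - (n - j0)) + k) ∧
      (if i ≤ n - j0 then t (j0 + i) + k - (m : ℤ) * n - 1
       else t (i - (n - j0)) + k) ≤ (m : ℤ) * n) ∧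
    (∀ i j, 1 ≤ i → i ≤ j → j ≤ n →
      (if i ≤ n - j0 then t (j0 + i) + k - (m : ℤ) * n - 1
       else t (i - (n - j0)) + k) ≤
      (if j ≤ n - j0 then t (j0 + j) + k - (m : ℤ) * n - 1
       else t (j - (n - j0)) + k)) :=
  rotated_dyck_is_lattice_path_general m n t k j0 hmono hnn hdyck hk0 hkmn hle hgt
end

section
/- Define ψ from (pairs consisting of an integer sequence (β_1,...,β_n) with sum 0, and an integer k) to antisymmetric integer sequences of length 2n: ψ((β_i), k) is the antisymmetric sequence (γ_1,...,γ_n,-γ_n,...,-γ_1) obtained as follows. Write the multiset {i + nβ_i + k : 1 ≤ i ≤ n} in base-level form as {r_i + n·a_i} with r_i ∈ {1,...,n}, and let the expanded multiset be {r_i + 2n·a_i, (2n+1-r_i) + 2n·(-a_i) : 1 ≤ i ≤ n}; γ_j is the level of j in this expanded multiset. Then ψ is a bijection onto the set of antisymmetric level vectors (γ_1,...,γ_n,-γ_n,...,-γ_1) ∈ Z^{2n}, with inverse recovering k = γ_1 + ... + γ_n. -/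
/-
Shifting the window by `k` moves the entry of position `i` to position `i + k (mod n)` and raises
its level by `(i + k) / n`. The `n` consecutive integers `i + k` meet every residue once, so these
level increments sum to `k`; hence `(β, k)` is recovered from the shifted level vector `δ` as
`k = ∑ δ`, and `(β, k) ↦ δ` is a bijection onto all of `ℤⁿ`. The antisymmetric expansion is a
bijection from `ℤⁿ` onto antisymmetric vectors of length `2n`, inverted by restricting to the
first `n` coordinates.
-/

theorem Int.sub_emod_ediv (a b : ℤ) : (a - a % b) / b = a / b := by
  rw [Int.emod_def, sub_sub_cancel]
  rcases eq_or_ne b 0 with rfl | hb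
  · simp
  · exact Int.mul_ediv_cancel_left _ hb

open scoped Fin.IntCast

namespace Fin

variable {n : ℕ} [NeZero n]

theorem intCast_val_add_intCast (i : Fin n) (k : ℤ) :
    (((i + (k : Fin n) : Fin n) : ℕ) : ℤ) = ((i : ℕ) + k) % n := by
  have hn : (0 : ℤ) < n := by exact_mod_cast Nat.pos_of_ne_zero (NeZero.ne n)
  rw [Fin.val_add, Fin.val_intCast]
  push_cast
  rw [Int.toNat_of_nonneg (Int.emod_nonneg _ hn.ne'), Int.add_emod_emod]

theorem sum_intCast_val_add_ediv (k : ℤ) : ∑ i : Fin n, ((i : ℕ) + k) / (n : ℤ) = k := by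
  have hn : (n : ℤ) ≠ 0 := by exact_mod_cast NeZero.ne n
  apply mul_left_cancel₀ hn
  have hperm : ∑ i : Fin n, (((i + (k : Fin n) : Fin n) : ℕ) : ℤ) = ∑ i : Fin n, ((i : ℕ) : ℤ) :=
    Equiv.sum_comp (Equiv.addRight (k : Fin n)) (fun i => ((i : ℕ) : ℤ))
  simp only [intCast_val_add_intCast] at hperm
  calc (n : ℤ) * ∑ i : Fin n, ((i : ℕ) + k) / (n : ℤ)
      = ∑ i : Fin n, (((i : ℕ) + k) - ((i : ℕ) + k) % n) := by
        rw [Finset.mul_sum]; congr! 1 with i; rw [Int.emod_def]; ring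
    _ = n * k := by
        rw [Finset.sum_sub_distrib, hperm, Finset.sum_add_distrib]; simp

end Fin

section Antisymmetric

variable {α : Type*} [InvolutiveNeg α] {n : ℕ}

def antisymmExtend (f : Fin n → α) (j : Fin (2 * n)) : α :=
  if h : (j : ℕ) < n then f ⟨j, h⟩ else -f ⟨2 * n - 1 - j, by omega⟩

theorem antisymmExtend_castLE (f : Fin n → α) (i : Fin n) :
    antisymmExtend f (Fin.castLE (by omega) i) = f i := by
  simp [antisymmExtend]

theorem antisymmExtend_rev (f : Fin n → α) (j : Fin (2 * n)) :
    antisymmExtend f j.rev = -antisymmExtend f j := by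
  have hj := j.isLt
  unfold antisymmExtend
  by_cases h : (j : ℕ) < n
  · rw [dif_neg (by rw [Fin.val_rev]; omega), dif_pos h]
    congr 3; simp only [Fin.val_rev]; omega
  · rw [dif_pos (by rw [Fin.val_rev]; omega), dif_neg h, neg_neg]
    congr 2; simp only [Fin.val_rev]; omega

theorem Fin.exists_eq_castLE_or_eq_rev_castLE (j : Fin (2 * n)) :
    ∃ i : Fin n, j = Fin.castLE (by omega) i ∨ j = (Fin.castLE (by omega) i).rev := by
  by_cases h : (j : ℕ) < n
  · exact ⟨⟨j, h⟩, .inl rfl⟩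
  · exact ⟨⟨2 * n - 1 - j, by omega⟩, .inr (by ext; simp only [Fin.castLE_mk, Fin.val_rev]; omega)⟩

def antisymmEquiv : (Fin n → α) ≃ {γ : Fin (2 * n) → α // ∀ j, γ j = -γ j.rev} where
  toFun f := ⟨antisymmExtend f, fun j => by rw [antisymmExtend_rev, neg_neg]⟩
  invFun γ i := γ.1 (Fin.castLE (by omega) i)
  left_inv f := funext (antisymmExtend_castLE f)
  right_inv := by
    rintro ⟨γ, hγ⟩
    ext j
    show antisymmExtend (fun i => γ (Fin.castLE _ i)) j = γ j
    obtain ⟨i, rfl | rfl⟩ := Fin.exists_eq_castLE_or_eq_rev_castLE j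
    · exact antisymmExtend_castLE _ i
    · rw [antisymmExtend_rev, antisymmExtend_castLE, hγ, neg_neg]

theorem coe_antisymmEquiv_apply (f : Fin n → α) :
    (antisymmEquiv f : Fin (2 * n) → α) = antisymmExtend f := rfl

end Antisymmetric

section ShiftedLevels

variable {n : ℕ} [NeZero n]

-- the `i`-th entry `i + 1 + nβ i + k` of the shifted window sits at position `i + k (mod n)`
def shiftLevels (β : Fin n → ℤ) (k : ℤ) (j : Fin n) : ℤ :=
  β (j - k) + (((j - k : Fin n) : ℕ) + k) / (n : ℤ)

theorem shiftLevels_add_intCast (β : Fin n → ℤ) (k : ℤ) (i : Fin n) :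
    shiftLevels β k (i + k) = β i + ((i : ℕ) + k) / (n : ℤ) := by
  simp only [shiftLevels, add_sub_cancel_right]

theorem sum_shiftLevels (β : Fin n → ℤ) (k : ℤ) :
    ∑ j, shiftLevels β k j = ∑ i, β i + k := by
  rw [← Equiv.sum_comp (Equiv.addRight (k : Fin n))]
  simp only [Equiv.coe_addRight, shiftLevels_add_intCast, Finset.sum_add_distrib,
    Fin.sum_intCast_val_add_ediv]

variable (n) in
def shiftLevelsEquiv : {β : Fin n → ℤ // ∑ i, β i = 0} × ℤ ≃ (Fin n → ℤ) where
  toFun p := shiftLevels p.1.1 p.2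
  invFun δ :=
    (⟨fun i => δ (i + (∑ j, δ j : ℤ)) - ((i : ℕ) + ∑ j, δ j) / (n : ℤ), by
      rw [Finset.sum_sub_distrib, Fin.sum_intCast_val_add_ediv, sub_eq_zero]
      exact Equiv.sum_comp (Equiv.addRight _) δ⟩, ∑ j, δ j)
  left_inv := by
    rintro ⟨⟨β, hβ⟩, k⟩
    have hk : ∑ j, shiftLevels β k j = k := by rw [sum_shiftLevels, hβ, zero_add]
    ext i
    · simp only [hk, shiftLevels_add_intCast, add_sub_cancel_right]
    · exact hk
  right_inv δ := by
    ext j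
    simp only [shiftLevels, sub_add_cancel]

theorem shiftLevelsEquiv_apply (p : {β : Fin n → ℤ // ∑ i, β i = 0} × ℤ) :
    shiftLevelsEquiv n p = shiftLevels p.1.1 p.2 := rfl

end ShiftedLevels

/-- The map ψ, sending a pair consisting of a type-A level vector
`(β_1, …, β_n)` (sum `0`) and an integer `k` to the antisymmetric level vector
of the antisymmetric expansion of the k-shifted window `{i + nβ_i + k}`, is a
bijection onto antisymmetric integer vectors `(γ_1, …, γ_{2n})` with
`γ_j = -γ_{2n+1-j}`; the inverse recovers `k = γ_1 + ⋯ + γ_n`. Here, writing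
the `i`-th shifted window entry in base-level form as `r + n·a` with
`r ∈ {1, …, n}` (so `r = ((i + k) mod n) + 1` for 0-indexed `i`), the expansion
has level `a` at position `r` and level `-a` at position `2n+1-r`. -/
theorem psi_bijection (n : ℕ) (hn : 0 < n) :
    ∃ ψ : {β : Fin n → ℤ // ∑ i, β i = 0} × ℤ ≃
          {γ : Fin (2 * n) → ℤ // ∀ j : Fin (2 * n), γ j = -γ j.rev},
      ∀ p : {β : Fin n → ℤ // ∑ i, β i = 0} × ℤ,
        (∑ j : Fin n, (ψ p).1 (Fin.castLE (by omega) j)) = p.2 ∧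
        ∀ i : Fin n, ∀ j : Fin (2 * n),
          ((((j : ℕ) : ℤ) + 1 = ((((i : ℕ) : ℤ) + p.2) % (n : ℤ)) + 1 →
            (ψ p).1 j = p.1.1 i +
              (((i : ℕ) : ℤ) + 1 + p.2 -
                (((((i : ℕ) : ℤ) + p.2) % (n : ℤ)) + 1)) / (n : ℤ)) ∧
          (((j : ℕ) : ℤ) + 1 = 2 * (n : ℤ) + 1 -
              (((((i : ℕ) : ℤ) + p.2) % (n : ℤ)) + 1) →
            (ψ p).1 j = -(p.1.1 i +
              (((i : ℕ) : ℤ) + 1 + p.2 -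
                (((((i : ℕ) : ℤ) + p.2) % (n : ℤ)) + 1)) / (n : ℤ)))) := by
  have : NeZero n := ⟨hn.ne'⟩
  refine ⟨(shiftLevelsEquiv n).trans antisymmEquiv, fun ⟨⟨β, hβ⟩, k⟩ => ⟨?_, fun i j => ?_⟩⟩ <;>
    simp only [Equiv.trans_apply, shiftLevelsEquiv_apply, coe_antisymmEquiv_apply]
  · simp only [antisymmExtend_castLE, sum_shiftLevels, hβ, zero_add]
  have hlevel : ((i : ℕ) + 1 + k - (((i : ℕ) + k) % (n : ℤ) + 1)) / (n : ℤ)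
      = ((i : ℕ) + k) / (n : ℤ) := by
    rw [add_right_comm, add_sub_add_right_eq_sub, Int.sub_emod_ediv]
  have hpos := Fin.intCast_val_add_intCast i k
  refine ⟨fun hji => ?_, fun hji => ?_⟩
  · have hj : j = Fin.castLE (by omega) (i + (k : Fin n)) := by
      ext; simp only [Fin.val_castLE]; omega
    rw [hj, antisymmExtend_castLE, shiftLevels_add_intCast, hlevel]
  · have hj : j = (Fin.castLE (by omega) (i + (k : Fin n))).rev := by
      ext; simp only [Fin.val_rev, Fin.val_castLE]; omega
    rw [hj, antisymmExtend_rev, antisymmExtend_castLE, shiftLevels_add_intCast, hlevel]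
end

section
/- Let T = (k_{ij})_{1 ≤ i ≤ j ≤ n} with entries defined from a sorted abacus [r_1^{ℓ_1}, ..., r_{n+1}^{ℓ_{n+1}}] (with {r_1,...,r_{n+1}} = {1,...,n+1}, ℓ's summing to 0, and r_1 + (n+1)ℓ_1 < ... < r_{n+1} + (n+1)ℓ_{n+1}) by k_{ij} = ℓ_{j+1} - ℓ_i if r_i < r_{j+1}, and k_{ij} = ℓ_{j+1} - ℓ_i - 1 if r_i > r_{j+1}. Then all entries k_{ij} are nonnegative. -/
/-!
The values `r_t` lie in `{1, …, n+1}`, so the window inequality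
`r_i + (n+1)ℓ_i < r_{j+1} + (n+1)ℓ_{j+1}` gives `(n+1)(ℓ_{j+1} - ℓ_i) > r_i - r_{j+1}`, where the
right side exceeds `-(n+1)` and is nonnegative when `r_i > r_{j+1}`. Dividing by `n+1` yields
`ℓ_{j+1} - ℓ_i ≥ 0`, respectively `ℓ_{j+1} - ℓ_i ≥ 1`.
-/

open Finset

theorem Finset.mapsTo_of_surjOn_of_card_le {α β : Type*} [DecidableEq β] {s : Finset α}
    {t : Finset β} {f : α → β} (hf : Set.SurjOn f s t) (hcard : #s ≤ #t) :
    Set.MapsTo f s t := by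
  have hsub : t ⊆ s.image f := by
    intro b hb
    obtain ⟨a, ha, rfl⟩ := hf hb
    exact mem_image_of_mem f ha
  have himage : s.image f = t :=
    (eq_of_subset_of_card_le hsub (card_image_le.trans hcard)).symm
  intro a ha
  rw [mem_coe, ← himage]
  exact mem_image_of_mem f ha

theorem mem_Icc_of_forall_existsUnique {n : ℕ} {r : ℕ → ℤ}
    (hperm : ∀ v : ℤ, 1 ≤ v → v ≤ (n : ℤ) + 1 → ∃! t : ℕ, 1 ≤ t ∧ t ≤ n + 1 ∧ r t = v)
    {t : ℕ} (ht₁ : 1 ≤ t) (ht₂ : t ≤ n + 1) : 1 ≤ r t ∧ r t ≤ (n : ℤ) + 1 := by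
  have hsurj : Set.SurjOn r (Icc 1 (n + 1) : Finset ℕ) (Icc (1 : ℤ) (n + 1) : Finset ℤ) := by
    intro v hv
    rw [coe_Icc, Set.mem_Icc] at hv
    obtain ⟨u, ⟨hu₁, hu₂, hru⟩, -⟩ := hperm v hv.1 hv.2
    exact ⟨u, by simp [hu₁, hu₂], hru⟩
  have hcard : #(Icc 1 (n + 1) : Finset ℕ) ≤ #(Icc (1 : ℤ) (n + 1)) := by
    simp only [Nat.card_Icc, Int.card_Icc]
    omega
  simpa using mapsTo_of_surjOn_of_card_le hsurj hcard (by simp [ht₁, ht₂])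

section Window

variable {m a b x y : ℤ}

theorem le_of_add_mul_lt_add_mul (hm : 0 < m) (ha : 1 ≤ a) (hb : b ≤ m)
    (h : a + m * x < b + m * y) : x ≤ y := by
  have hmul : m * x < m * (y + 1) := by linarith
  exact Int.lt_add_one_iff.1 ((mul_lt_mul_iff_of_pos_left hm).1 hmul)

theorem lt_of_add_mul_lt_add_mul (hm : 0 < m) (hba : b ≤ a) (h : a + m * x < b + m * y) :
    x < y := by
  have hmul : m * x < m * y := by linarith
  exact (mul_lt_mul_iff_of_pos_left hm).1 hmul

end Window

theorem sorted_abacus_tableau_nonneg_general (n : ℕ) (r ℓ : ℕ → ℤ)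
    (hperm : ∀ v : ℤ, 1 ≤ v → v ≤ (n : ℤ) + 1 →
      ∃! t : ℕ, 1 ≤ t ∧ t ≤ n + 1 ∧ r t = v)
    (hsort : ∀ t u, 1 ≤ t → t < u → u ≤ n + 1 →
      r t + ((n : ℤ) + 1) * ℓ t < r u + ((n : ℤ) + 1) * ℓ u) :
    ∀ i j, 1 ≤ i → i ≤ j → j ≤ n →
      0 ≤ (if r i < r (j + 1) then ℓ (j + 1) - ℓ i else ℓ (j + 1) - ℓ i - 1) := by
  intro i j hi hij hj
  have hm : (0 : ℤ) < n + 1 := by positivity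
  have hwindow := hsort i (j + 1) hi (by omega) (by omega)
  split_ifs with hr
  · have hri := (mem_Icc_of_forall_existsUnique hperm hi (by omega)).1
    have hrj := (mem_Icc_of_forall_existsUnique hperm (t := j + 1) (by omega) (by omega)).2
    linarith [le_of_add_mul_lt_add_mul hm hri hrj hwindow]
  · linarith [lt_of_add_mul_lt_add_mul hm (not_lt.1 hr) hwindow]

/-- For a sorted abacus `[r_1^{ℓ_1}, …, r_{n+1}^{ℓ_{n+1}}]` (the `r_t` a
permutation of `{1, …, n+1}`, levels summing to `0`, window entries
`r_t + (n+1)ℓ_t` strictly increasing), all Shi tableau entries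
`k_{ij} = ℓ_{j+1} - ℓ_i - [r_i > r_{j+1}]` are nonnegative. -/
theorem sorted_abacus_tableau_nonneg (n : ℕ) (hn : 0 < n) (r ℓ : ℕ → ℤ)
    (hperm : ∀ v : ℤ, 1 ≤ v → v ≤ (n : ℤ) + 1 →
      ∃! t : ℕ, 1 ≤ t ∧ t ≤ n + 1 ∧ r t = v)
    (hsum : ∑ t ∈ Finset.Icc 1 (n + 1), ℓ t = 0)
    (hsort : ∀ t u, 1 ≤ t → t < u → u ≤ n + 1 →
      r t + ((n : ℤ) + 1) * ℓ t < r u + ((n : ℤ) + 1) * ℓ u) :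
    ∀ i j, 1 ≤ i → i ≤ j → j ≤ n →
      0 ≤ (if r i < r (j + 1) then ℓ (j + 1) - ℓ i else ℓ (j + 1) - ℓ i - 1) :=
  sorted_abacus_tableau_nonneg_general n r ℓ hperm hsort
end

section
/- Let the abacus [r_1^{ℓ_1},...,r_{2n}^{ℓ_{2n}}] be balanced, i.e., r_i + r_{2n+1-i} = 2n+1 and ℓ_i + ℓ_{2n+1-i} = 0 for all i, with {r_1,...,r_{2n}} = {1,...,2n} and the numbers r_t + 2nℓ_t strictly increasing. Define k_{ij} (1 ≤ i ≤ j ≤ 2n-1) by k_{ij} = ℓ_{j+1} - ℓ_i if r_i < r_{j+1} and k_{ij} = ℓ_{j+1} - ℓ_i - 1 if r_i > r_{j+1}. Then the resulting tableau is self-conjugate: k_{2n-j, 2n-i} = k_{ij} for all 1 ≤ i ≤ j ≤ 2n-1. -/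
/-- The Shi tableau entry `k_{ij}` of the paper is `shiEntry r ℓ i (j + 1)`. -/
def shiEntry (r ℓ : ℕ → ℤ) (a b : ℕ) : ℤ :=
  if r a < r b then ℓ b - ℓ a else ℓ b - ℓ a - 1

theorem shiEntry_eq_of_reflect {r ℓ : ℕ → ℤ} {a b a' b' : ℕ} (c : ℤ)
    (hra : r a + r b' = c) (hrb : r b + r a' = c)
    (hla : ℓ a + ℓ b' = 0) (hlb : ℓ b + ℓ a' = 0) :
    shiEntry r ℓ a' b' = shiEntry r ℓ a b := by
  unfold shiEntry
  split_ifs <;> omega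

theorem balanced_abacus_selfconjugate_general (n : ℕ) (r ℓ : ℕ → ℤ)
    (hbal : ∀ i, 1 ≤ i → i ≤ 2 * n →
      r i + r (2 * n + 1 - i) = 2 * (n : ℤ) + 1 ∧ ℓ i + ℓ (2 * n + 1 - i) = 0) :
    ∀ i j, 1 ≤ i → i ≤ j → j ≤ 2 * n - 1 →
      (if r (2 * n - j) < r (2 * n - i + 1)
        then ℓ (2 * n - i + 1) - ℓ (2 * n - j)
        else ℓ (2 * n - i + 1) - ℓ (2 * n - j) - 1) =
      (if r i < r (j + 1) then ℓ (j + 1) - ℓ i else ℓ (j + 1) - ℓ i - 1) := by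
  intro i j hi hij hj
  obtain ⟨hri, hli⟩ := hbal i hi (by omega)
  obtain ⟨hrj, hlj⟩ := hbal (j + 1) (by omega) (by omega)
  rw [show 2 * n + 1 - i = 2 * n - i + 1 by omega] at hri hli
  rw [show 2 * n + 1 - (j + 1) = 2 * n - j by omega] at hrj hlj
  exact shiEntry_eq_of_reflect _ hri hrj hli hlj

/-- For a balanced sorted abacus `[r_1^{ℓ_1}, …, r_{2n}^{ℓ_{2n}}]`
(`r_i + r_{2n+1-i} = 2n+1`, `ℓ_i + ℓ_{2n+1-i} = 0`, the `r_t` a permutation of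
`{1, …, 2n}`, window entries strictly increasing), the Shi tableau
`k_{ij} = ℓ_{j+1} - ℓ_i - [r_i > r_{j+1}]` is self-conjugate:
`k_{2n-j, 2n-i} = k_{ij}` for all `1 ≤ i ≤ j ≤ 2n-1`. -/
theorem balanced_abacus_selfconjugate (n : ℕ) (hn : 0 < n) (r ℓ : ℕ → ℤ)
    (hperm : ∀ v : ℤ, 1 ≤ v → v ≤ 2 * (n : ℤ) →
      ∃! t : ℕ, 1 ≤ t ∧ t ≤ 2 * n ∧ r t = v)
    (hsort : ∀ t u, 1 ≤ t → t < u → u ≤ 2 * n →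
      r t + 2 * (n : ℤ) * ℓ t < r u + 2 * (n : ℤ) * ℓ u)
    (hbal : ∀ i, 1 ≤ i → i ≤ 2 * n →
      r i + r (2 * n + 1 - i) = 2 * (n : ℤ) + 1 ∧ ℓ i + ℓ (2 * n + 1 - i) = 0) :
    ∀ i j, 1 ≤ i → i ≤ j → j ≤ 2 * n - 1 →
      (if r (2 * n - j) < r (2 * n - i + 1)
        then ℓ (2 * n - i + 1) - ℓ (2 * n - j)
        else ℓ (2 * n - i + 1) - ℓ (2 * n - j) - 1) =
      (if r i < r (j + 1) then ℓ (j + 1) - ℓ i else ℓ (j + 1) - ℓ i - 1) :=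
  balanced_abacus_selfconjugate_general n r ℓ hbal
end
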